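/- The number of de Bruijn sequences of order n ≥ 1 over an alphabet of size t, started at 0^n, that have preference function complexity 0 is exactly (t-1)!. -/

import Mathlib

namespace DeBruijnPaper

/-- The word (block) of length `n` starting at position `i` of the sequence `a`. -/
def wordAt {t : ℕ} (a : ℕ → Fin t) (n i : ℕ) : Fin n → Fin t :=
  fun j => a (i + (j : ℕ))

/-- `w` has appeared as a block entirely within the first `k` symbols of `a`. -/
def Seen {t : ℕ} (a : ℕ → Fin t) (n k : ℕ) (w : Fin n → Fin t) : Prop :=
  ∃ p, p + n ≤ k ∧ wordAt a n p = w

/-- The candidate `n`-word whose last symbol (at position `k`) is replaced by `c`,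
preceded by the `n-1` symbols `a (k-(n-1)), …, a (k-1)`. -/
def cand {t : ℕ} (a : ℕ → Fin t) (n k : ℕ) (c : Fin t) : Fin n → Fin t :=
  fun j => if (j : ℕ) + 1 = n then c else a (k - (n - 1) + (j : ℕ))

/-- `P` is a preference function of span `m`: to each word of length `m` it assigns a
priority listing of the alphabet, i.e. `P w : Fin t → Fin t` is a bijection,
`P w i` being the `i`-th preferred symbol after the word `w`. -/
def IsPrefFun (t m : ℕ) (P : (Fin m → Fin t) → Fin t → Fin t) : Prop :=
  ∀ w, Function.Bijective (P w)

/-- The sequence `a` (of length `L`) is produced by the greedy Algorithm P for the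
preference function `P` of span `m`, at order `n`, from the initial word `I`:
it starts with `I`, every `n`-word occurs at most once, each appended symbol is the
highest-priority symbol (priorities determined by the last `m` symbols) forming a
new `n`-word, and the sequence is maximal (cannot be extended). -/
structure GenSeqFrom (t m n : ℕ) (I : Fin n → Fin t)
    (P : (Fin m → Fin t) → Fin t → Fin t) (a : ℕ → Fin t) (L : ℕ) : Prop where
  len_ge : n ≤ L
  init : ∀ j : Fin n, a (j : ℕ) = I j
  inj : ∀ i j, i + n ≤ L → j + n ≤ L → wordAt a n i = wordAt a n j → i = j
  greedy : ∀ k, n ≤ k → k < L → ∃ i : Fin t,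
    a k = P (wordAt a m (k - m)) i ∧
    ∀ j : Fin t, j < i → Seen a n k (cand a n k (P (wordAt a m (k - m)) j))
  maximal : ∀ c : Fin t, Seen a n L (cand a n L c)

/-- The sequence `a` of length `L` contains every `n`-word over the alphabet. -/
def Full (t n : ℕ) (a : ℕ → Fin t) (L : ℕ) : Prop :=
  ∀ w : Fin n → Fin t, ∃ p, p + n ≤ L ∧ wordAt a n p = w

/-- The all-zero word `0^n`. -/
def zeroWord (t n : ℕ) [NeZero t] : Fin n → Fin t := fun _ => 0

/-- The least preference function induced by `P`:
`g(a_1,…,a_m) = (a_2,…,a_m, P_t(a_1,…,a_m))`. -/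
def leastPF {t m : ℕ} (ht : 0 < t) (P : (Fin m → Fin t) → Fin t → Fin t)
    (w : Fin m → Fin t) : Fin m → Fin t :=
  fun j => if h : (j : ℕ) + 1 = m then P w ⟨t - 1, Nat.sub_lt ht Nat.one_pos⟩
           else w ⟨(j : ℕ) + 1, by have := j.isLt; omega⟩

/-- `g` has no cycles of any length other than the self-loop at the all-zero word. -/
def OnlyZeroCycle {t m : ℕ} [NeZero t] (g : (Fin m → Fin t) → Fin m → Fin t) : Prop :=
  g (fun _ => 0) = (fun _ => 0) ∧
  ∀ (x : Fin m → Fin t) (l : ℕ), 0 < l → g^[l] x = x → x = fun _ => 0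

/-- Extend a finite sequence by zeros to a sequence indexed by `ℕ`. -/
def ext {t L : ℕ} [NeZero t] (S : Fin L → Fin t) : ℕ → Fin t :=
  fun i => if h : i < L then S ⟨i, h⟩ else 0

open Finset
set_option linter.unusedVariables false

attribute [local instance] Classical.propDecidable

variable {t : ℕ}

lemma wordAt_congr {a b : ℕ → Fin t} {n k p : ℕ} (hab : ∀ i, i < k → a i = b i)
    (hp : p + n ≤ k) : wordAt a n p = wordAt b n p := by
  funext j; exact hab _ (by have := j.isLt; omega)

lemma seen_congr {a b : ℕ → Fin t} {n k : ℕ} (hab : ∀ i, i < k → a i = b i)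
    {w : Fin n → Fin t} (h : Seen a n k w) : Seen b n k w := by
  obtain ⟨p, hp, hw⟩ := h
  exact ⟨p, hp, by rw [← wordAt_congr hab hp]; exact hw⟩

lemma seen_mono {a : ℕ → Fin t} {n k k' : ℕ} (hk : k ≤ k') {w : Fin n → Fin t}
    (h : Seen a n k w) : Seen a n k' w := by
  obtain ⟨p, hp, hw⟩ := h
  exact ⟨p, le_trans hp hk, hw⟩

lemma cand_congr {a b : ℕ → Fin t} {n k : ℕ} (hk : n ≤ k)
    (hab : ∀ i, i < k → a i = b i) (c : Fin t) : cand a n k c = cand b n k c := by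
  funext j
  by_cases hj : (j : ℕ) + 1 = n
  · simp [cand, hj]
  · simp only [cand, if_neg hj]
    exact hab _ (by have := j.isLt; omega)

/-- the `(n-1)`-prefix-state at position `p` -/
def st (a : ℕ → Fin t) (n p : ℕ) : Fin (n-1) → Fin t := fun j => a (p + j)

/-- extend a state by a last symbol -/
def ezc (n : ℕ) (v : Fin (n-1) → Fin t) (c : Fin t) : Fin n → Fin t :=
  fun j => if h : (j : ℕ) < n - 1 then v ⟨j, h⟩ else c

/-- extend a state by a first symbol -/
def czs (n : ℕ) (c : Fin t) (v : Fin (n-1) → Fin t) : Fin n → Fin t :=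
  fun j => if h : (j : ℕ) = 0 then c else v ⟨(j : ℕ) - 1, by have := j.isLt; omega⟩

lemma st_congr {a b : ℕ → Fin t} {n k p : ℕ} (hab : ∀ i, i < k → a i = b i)
    (hp : p + n ≤ k) (hn : 1 ≤ n) : st a n p = st b n p := by
  funext j; exact hab _ (by have := j.isLt; omega)

lemma wordAt_eq_ezc (a : ℕ → Fin t) {n : ℕ} (hn : 1 ≤ n) (p : ℕ) :
    wordAt a n p = ezc n (st a n p) (a (p + (n-1))) := by
  funext j
  simp only [wordAt, ezc, st]
  split
  · rfl
  · congr 1; have := j.isLt; omega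

lemma wordAt_eq_czs (a : ℕ → Fin t) {n : ℕ} (hn : 1 ≤ n) (p : ℕ) :
    wordAt a n p = czs n (a p) (st a n (p+1)) := by
  funext j
  simp only [wordAt, czs, st]
  split
  · next h => rw [h]; rfl
  · congr 1; have := j.isLt; omega

lemma cand_eq_ezc (a : ℕ → Fin t) {n k : ℕ} (hk : n ≤ k) (c : Fin t) :
    cand a n k c = ezc n (st a n (k - (n-1))) c := by
  funext j
  have hj := j.isLt
  simp only [cand, ezc, st]
  by_cases h : (j : ℕ) + 1 = n
  · rw [if_pos h, dif_neg (by omega)]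
  · rw [if_neg h, dif_pos (by omega)]

lemma ezc_last {n : ℕ} (hn : 1 ≤ n) (v : Fin (n-1) → Fin t) (c : Fin t) :
    ezc n v c ⟨n-1, by omega⟩ = c := dif_neg (by simp)

lemma ezc_inj {n : ℕ} (hn : 1 ≤ n) {v v' : Fin (n-1) → Fin t} {c c' : Fin t}
    (h : ezc n v c = ezc n v' c') : v = v' ∧ c = c' := by
  constructor
  · funext j
    have hj := j.isLt
    have := congrFun h ⟨(j : ℕ), by omega⟩
    simpa [ezc, dif_pos hj] using this
  · have := congrFun h ⟨n-1, by omega⟩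
    simpa [ezc] using this

lemma czs_inj_fst {n : ℕ} (hn : 1 ≤ n) {v v' : Fin (n-1) → Fin t} {c c' : Fin t}
    (h : czs n c v = czs n c' v') : c = c' := by
  have := congrFun h ⟨0, by omega⟩
  simpa [czs] using this

/-- all `n`-words within the first `k` symbols are distinct -/
def Dist (a : ℕ → Fin t) (n k : ℕ) : Prop :=
  ∀ p q, p + n ≤ k → q + n ≤ k → wordAt a n p = wordAt a n q → p = q

/-- stuck at `k`: every candidate extension has been seen -/
def Stuck (a : ℕ → Fin t) (n k : ℕ) : Prop :=
  ∀ c : Fin t, Seen a n k (cand a n k c)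

/-- number of used out-edges of state `v` among the first `E` positions -/
def outd (a : ℕ → Fin t) (n E : ℕ) (v : Fin (n-1) → Fin t) : ℕ :=
  ((Finset.range E).filter (fun p => st a n p = v)).card

/-- number of used in-edges of state `v` among the first `E` positions -/
def innd (a : ℕ → Fin t) (n E : ℕ) (v : Fin (n-1) → Fin t) : ℕ :=
  ((Finset.range E).filter (fun p => st a n (p+1) = v)).card

lemma filter_range_succ (P : ℕ → Prop) [DecidablePred P] (E : ℕ) :
    ((Finset.range (E+1)).filter P).card
      = ((Finset.range E).filter P).card + (if P E then 1 else 0) := by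
  rw [Finset.range_add_one, Finset.filter_insert]
  by_cases h : P E
  · rw [if_pos h, if_pos h,
      Finset.card_insert_of_notMem (fun hc => Finset.notMem_range_self (Finset.mem_of_mem_filter _ hc))]
  · rw [if_neg h, if_neg h]; rfl

lemma bal (a : ℕ → Fin t) (n E : ℕ) (v : Fin (n-1) → Fin t) :
    innd a n E v + (if st a n 0 = v then 1 else 0)
      = outd a n E v + (if st a n E = v then 1 else 0) := by
  induction E with
  | zero => simp [innd, outd]
  | succ E ih =>
    have h1 := filter_range_succ (fun p => st a n p = v) E
    have h2 := filter_range_succ (fun p => st a n (p+1) = v) E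
    beta_reduce at h1 h2
    simp only [innd, outd] at *
    rw [h1, h2]
    omega

lemma outd_le (a : ℕ → Fin t) {n k E : ℕ} (hn : 1 ≤ n)
    (hE : ∀ p, p < E → p + n ≤ k) (hd : Dist a n k) (v : Fin (n-1) → Fin t) :
    outd a n E v ≤ t := by
  have h := Finset.card_le_card_of_injOn (f := fun p => a (p + (n-1)))
    (s := (Finset.range E).filter (fun p => st a n p = v)) (t := (Finset.univ : Finset (Fin t)))
    (fun _ _ => Finset.mem_univ _) ?_
  · simpa [outd] using h
  · intro p hp q hq hpq
    simp only [Finset.coe_filter, Set.mem_setOf_eq, Finset.mem_range] at hp hq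
    have hpq' : a (p + (n-1)) = a (q + (n-1)) := hpq
    apply hd p q (hE _ hp.1) (hE _ hq.1)
    rw [wordAt_eq_ezc a hn p, wordAt_eq_ezc a hn q, hp.2, hq.2, hpq']

lemma innd_le (a : ℕ → Fin t) {n k E : ℕ} (hn : 1 ≤ n)
    (hE : ∀ p, p < E → p + n ≤ k) (hd : Dist a n k) (v : Fin (n-1) → Fin t) :
    innd a n E v ≤ t := by
  have h := Finset.card_le_card_of_injOn (f := fun p => a p)
    (s := (Finset.range E).filter (fun p => st a n (p+1) = v)) (t := (Finset.univ : Finset (Fin t)))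
    (fun _ _ => Finset.mem_univ _) ?_
  · simpa [innd] using h
  · intro p hp q hq hpq
    simp only [Finset.coe_filter, Set.mem_setOf_eq, Finset.mem_range] at hp hq
    have hpq' : a p = a q := hpq
    apply hd p q (hE _ hp.1) (hE _ hq.1)
    rw [wordAt_eq_czs a hn p, wordAt_eq_czs a hn q, hp.2, hq.2, hpq']

variable [NeZero t]

/-- greedy-step property for span-0 preference `π`, for all steps below `k` -/
def GSg (π : Fin t → Fin t) (a : ℕ → Fin t) (n k : ℕ) : Prop :=
  ∀ k', n ≤ k' → k' < k → ∃ i : Fin t, a k' = π i ∧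
    ∀ j : Fin t, j < i → Seen a n k' (cand a n k' (π j))

lemma seen_pos_st {a : ℕ → Fin t} {n k : ℕ} (hn : 1 ≤ n) {v : Fin (n-1) → Fin t} {c : Fin t}
    (h : Seen a n k (ezc n v c)) :
    ∃ p, p + n ≤ k ∧ st a n p = v ∧ a (p + (n-1)) = c := by
  obtain ⟨p, hp, hw⟩ := h
  rw [wordAt_eq_ezc a hn p] at hw
  obtain ⟨h1, h2⟩ := ezc_inj hn hw
  exact ⟨p, hp, h1, h2⟩

lemma out_full {a : ℕ → Fin t} {n k E : ℕ} (hn : 1 ≤ n) (hE : E = k - n + 1) (hk : n ≤ k)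
    {v : Fin (n-1) → Fin t} (hall : ∀ c : Fin t, Seen a n k (ezc n v c)) :
    t ≤ outd a n E v := by
  choose p hp hst hlast using fun c => seen_pos_st hn (hall c)
  have h := Finset.card_le_card_of_injOn (f := p) (s := (Finset.univ : Finset (Fin t)))
    (t := (range E).filter (fun q => st a n q = v)) ?_ ?_
  · simpa [outd] using h
  · intro c _
    simp only [Finset.coe_filter, Set.mem_setOf_eq, Finset.mem_coe, mem_filter, mem_range]
    exact ⟨by have := hp c; omega, hst c⟩
  · intro c _ c' _ hcc
    rw [← hlast c, ← hlast c', hcc]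

lemma stuck_out {a : ℕ → Fin t} {n k : ℕ} (hn : 1 ≤ n) (hk : n ≤ k)
    (hstuck : Stuck a n k) : t ≤ outd a n (k-n+1) (st a n (k-n+1)) := by
  apply out_full hn rfl hk
  intro c
  have h := hstuck c
  rwa [cand_eq_ezc a hk, show k - (n-1) = k - n + 1 by omega] at h

lemma stuck_state {a : ℕ → Fin t} {n k : ℕ} (hn : 1 ≤ n) (hk : n ≤ k)
    (hd : Dist a n k) (hstuck : Stuck a n k) : st a n (k-n+1) = st a n 0 := by
  by_contra hne
  have hout := stuck_out hn hk hstuck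
  have hbal := bal a n (k-n+1) (st a n (k-n+1))
  rw [if_neg (fun h => hne h.symm), if_pos rfl] at hbal
  have hinn := innd_le a (k := k) (E := k-n+1) hn (fun p hp => by omega) hd (st a n (k-n+1))
  omega

lemma stuck_balance {a : ℕ → Fin t} {n k : ℕ} (hn : 1 ≤ n) (hk : n ≤ k)
    (hd : Dist a n k) (hstuck : Stuck a n k) (v : Fin (n-1) → Fin t) :
    innd a n (k-n+1) v = outd a n (k-n+1) v := by
  have hbal := bal a n (k-n+1) v
  rw [stuck_state hn hk hd hstuck] at hbal
  omega

lemma in_full_seen {a : ℕ → Fin t} {n k E : ℕ} (hn : 1 ≤ n) (hE : E = k - n + 1) (hk : n ≤ k)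
    (hd : Dist a n k) {v : Fin (n-1) → Fin t} (hin : t ≤ innd a n E v) (c : Fin t) :
    Seen a n k (czs n c v) := by
  have hinj : Set.InjOn (fun p => a p) ((range E).filter (fun p => st a n (p+1) = v)) := by
    intro p hp q hq hpq
    simp only [coe_filter, Set.mem_setOf_eq, mem_range] at hp hq
    have hpq' : a p = a q := hpq
    apply hd p q (by omega) (by omega)
    rw [wordAt_eq_czs a hn p, wordAt_eq_czs a hn q, hp.2, hq.2, hpq']
  have hcard : (((range E).filter (fun p => st a n (p+1) = v)).image (fun p => a p)).card
      = innd a n E v := by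
    rw [Finset.card_image_of_injOn hinj]; rfl
  have hle := innd_le a (k := k) (E := E) hn (fun p hp => by omega) hd v
  have huniv : ((range E).filter (fun p => st a n (p+1) = v)).image (fun p => a p)
      = Finset.univ := by
    apply Finset.eq_univ_of_card
    rw [hcard]
    simp only [Fintype.card_fin]
    omega
  have hc : c ∈ ((range E).filter (fun p => st a n (p+1) = v)).image (fun p => a p) := by
    rw [huniv]; exact mem_univ c
  obtain ⟨p, hp, hap⟩ := Finset.mem_image.1 hc
  simp only [mem_filter, mem_range] at hp
  exact ⟨p, by omega, by rw [wordAt_eq_czs a hn p, hap, hp.2]⟩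

lemma seen_zero_out {a : ℕ → Fin t} {π : Fin t → Fin t} {n k : ℕ} (ht : 2 ≤ t) (hn : 1 ≤ n)
    (hk : n ≤ k) (hz : ∀ i, i < n → a i = 0)
    (hG : GSg π a n k) (hπ : Function.Bijective π) (hπ0 : π ⟨t-1, by omega⟩ = 0)
    {v : Fin (n-1) → Fin t} (hv : v ≠ st a n 0) (hseen : Seen a n k (ezc n v 0)) :
    t ≤ outd a n (k-n+1) v := by
  obtain ⟨p, hp, hst, hlast⟩ := seen_pos_st hn hseen
  have hp0 : p ≠ 0 := by
    rintro rfl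
    exact hv hst.symm
  have hall : ∀ c : Fin t, Seen a n k (ezc n v c) := by
    intro c
    obtain ⟨i, hi⟩ := hπ.2 c
    by_cases hi' : i = ⟨t-1, by omega⟩
    · rw [← hi, hi', hπ0]
      exact hseen
    · -- i < last, use greedy at k' = p + n - 1
      have hilt : (i : ℕ) < t - 1 := by
        have := i.isLt
        rcases Nat.lt_or_ge (i : ℕ) (t-1) with h | h
        · exact h
        · exact absurd (Fin.ext (show (i:ℕ) = t-1 by omega)) hi'
      obtain ⟨i', hi'eq, hi'seen⟩ := hG (p + n - 1) (by omega) (by omega)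
      have hak : a (p + n - 1) = π ⟨t-1, by omega⟩ := by
        rw [hπ0, show p + n - 1 = p + (n-1) by omega, hlast]
      have : i' = ⟨t-1, by omega⟩ := hπ.1 (by rw [← hi'eq, hak])
      rw [this] at hi'seen
      have hseen' := hi'seen i (by rw [Fin.lt_def]; exact hilt)
      rw [← hi]
      have hcand : cand a n (p + n - 1) (π i) = ezc n v (π i) := by
        rw [cand_eq_ezc a (by omega), show p + n - 1 - (n-1) = p by omega, hst]
      rw [hcand] at hseen'
      exact seen_mono (by omega) hseen'
  exact out_full hn rfl hk hall

lemma stuck_all_seen {a : ℕ → Fin t} {π : Fin t → Fin t} {n k : ℕ} (ht : 2 ≤ t) (hn : 1 ≤ n)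
    (hk : n ≤ k) (hz : ∀ i, i < n → a i = 0) (hd : Dist a n k) (hG : GSg π a n k)
    (hπ : Function.Bijective π) (hπ0 : π ⟨t-1, by omega⟩ = 0)
    (hstuck : Stuck a n k) (w : Fin n → Fin t) : Seen a n k w := by
  have hbal := stuck_balance hn hk hd hstuck
  have hout0 : outd a n (k-n+1) (st a n 0) = t := by
    have h1 := stuck_out hn hk hstuck
    rw [stuck_state hn hk hd hstuck] at h1
    have h2 := outd_le a (k := k) (E := k-n+1) hn (fun p hp => by omega) hd (st a n 0)
    omega
  by_contra hunseen
  -- if a word with tail-state v is unseen, then `outd v < t`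
  have tail_lt : ∀ (u : Fin n → Fin t), ¬ Seen a n k u →
      outd a n (k-n+1) (fun j : Fin (n-1) => u ⟨(j:ℕ)+1, by have := j.isLt; omega⟩) < t := by
    intro u hu
    set v := fun j : Fin (n-1) => u ⟨(j:ℕ)+1, by have := j.isLt; omega⟩ with hv
    have hcz : czs n (u ⟨0, by omega⟩) v = u := by
      funext j
      simp only [czs]
      split
      · next h => congr 1; exact Fin.ext h.symm
      · next h => simp only [hv]; congr 1; apply Fin.ext; simp only [Fin.val_mk]; have := j.isLt; omega
    have : ¬ (t ≤ innd a n (k-n+1) v) := by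
      intro hge
      exact hu (hcz ▸ in_full_seen hn rfl hk hd hge (u ⟨0, by omega⟩))
    rw [← hbal v]
    omega
  -- the unseen-state chain
  have main : ∀ r : ℕ, ∃ v : Fin (n-1) → Fin t,
      outd a n (k-n+1) v < t ∧ ∀ j : Fin (n-1), n - 1 - r ≤ (j:ℕ) → v j = 0 := by
    intro r
    induction r with
    | zero =>
      refine ⟨_, tail_lt w hunseen, ?_⟩
      intro j hj
      exact absurd (j.isLt) (by omega)
    | succ r ih =>
      obtain ⟨v, hvlt, hvz⟩ := ih
      have hvne : v ≠ st a n 0 := by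
        intro h
        rw [h] at hvlt
        omega
      have hunsn : ¬ Seen a n k (ezc n v 0) := by
        intro hs
        have := seen_zero_out ht hn hk hz hG hπ hπ0 hvne hs
        omega
      have hlt := tail_lt (ezc n v 0) hunsn
      refine ⟨_, hlt, ?_⟩
      intro j hj
      simp only [ezc]
      split
      · next h =>
        apply hvz
        simp only [Fin.val_mk]
        omega
      · rfl
  obtain ⟨v, hvlt, hvz⟩ := main (n-1)
  have : v = st a n 0 := by
    funext j
    rw [hvz j (by omega)]
    exact (hz (0 + (j:ℕ)) (by have := j.isLt; omega)).symm
  rw [this] at hvlt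
  omega
lemma dist_card {a : ℕ → Fin t} {n k : ℕ} (hn : 1 ≤ n) (hk : n ≤ k) (hd : Dist a n k) :
    k - n + 1 ≤ t ^ n := by
  have h := Finset.card_le_card_of_injOn (f := fun p => wordAt a n p)
    (s := range (k-n+1)) (t := (Finset.univ : Finset (Fin n → Fin t)))
    (fun _ _ => mem_univ _) ?_
  · simpa [Fintype.card_fun] using h
  · intro p hp q hq hpq
    simp only [coe_range, Set.mem_Iio] at hp hq
    have hpq' : wordAt a n p = wordAt a n q := hpq
    exact hd p q (by omega) (by omega) hpq'

lemma all_seen_card {a : ℕ → Fin t} {n k : ℕ} (hn : 1 ≤ n) (hk : n ≤ k)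
    (hall : ∀ w : Fin n → Fin t, Seen a n k w) : t ^ n ≤ k - n + 1 := by
  choose p hp hw using hall
  have h := Finset.card_le_card_of_injOn (f := p) (s := (Finset.univ : Finset (Fin n → Fin t)))
    (t := range (k-n+1)) (fun w _ => mem_range.2 (by have := hp w; omega)) ?_
  · simpa [Fintype.card_fun] using h
  · intro w _ w' _ hww
    rw [← hw w, ← hw w', hww]

lemma word_eq_cand {a : ℕ → Fin t} {n k : ℕ} (hn : 1 ≤ n) (hk : n ≤ k) :
    wordAt a n (k-n+1) = cand a n k (a k) := by
  funext j
  by_cases hj : (j:ℕ)+1 = n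
  · simp only [cand, if_pos hj, wordAt]
    congr 1; omega
  · simp only [cand, if_neg hj, wordAt]
    congr 1; have := j.isLt; omega

lemma dist_succ {a : ℕ → Fin t} {n k : ℕ} (hn : 1 ≤ n) (hk : n ≤ k) (hd : Dist a n k)
    (hunseen : ¬ Seen a n k (wordAt a n (k-n+1))) : Dist a n (k+1) := by
  intro p q hp hq hpq
  by_cases hpk : p + n ≤ k <;> by_cases hqk : q + n ≤ k
  · exact hd p q hpk hqk hpq
  · have hq' : q = k-n+1 := by omega
    exact absurd ⟨p, hpk, hq' ▸ hpq⟩ hunseen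
  · have hp' : p = k-n+1 := by omega
    exact absurd ⟨q, hqk, hp' ▸ hpq.symm⟩ hunseen
  · omega

/-- the greedily chosen next symbol -/
noncomputable def nextSym (π : Fin t → Fin t) (n : ℕ) [NeZero t] (b : ℕ → Fin t) (k : ℕ) : Fin t :=
  if hs : (Finset.univ.filter (fun i => ¬ Seen b n k (cand b n k (π i)))).Nonempty
  then π ((Finset.univ.filter (fun i => ¬ Seen b n k (cand b n k (π i)))).min' hs) else 0

lemma nextSym_spec {π : Fin t → Fin t} (hπ : Function.Bijective π) {b : ℕ → Fin t} {n k : ℕ}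
    (hns : ¬ Stuck b n k) :
    ∃ i : Fin t, nextSym π n b k = π i ∧ (∀ j : Fin t, j < i → Seen b n k (cand b n k (π j)))
      ∧ ¬ Seen b n k (cand b n k (π i)) := by
  have hs : (Finset.univ.filter (fun i => ¬ Seen b n k (cand b n k (π i)))).Nonempty := by
    by_contra h
    apply hns
    intro c
    obtain ⟨i, rfl⟩ := hπ.2 c
    by_contra hni
    exact h ⟨i, mem_filter.2 ⟨mem_univ _, hni⟩⟩
  refine ⟨_, dif_pos hs, ?_, ?_⟩
  · intro j hj
    by_contra hns'
    have hmem : j ∈ Finset.univ.filter (fun i => ¬ Seen b n k (cand b n k (π i))) :=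
      mem_filter.2 ⟨mem_univ _, hns'⟩
    exact absurd (Finset.min'_le _ j hmem) (not_le.2 hj)
  · exact (mem_filter.1 (Finset.min'_mem _ hs)).2

lemma nextSym_congr {π : Fin t → Fin t} {b b' : ℕ → Fin t} {n k : ℕ} (hk : n ≤ k)
    (hbb : ∀ i, i < k → b i = b' i) : nextSym π n b k = nextSym π n b' k := by
  have hfilter : (Finset.univ.filter (fun i => ¬ Seen b n k (cand b n k (π i))))
      = (Finset.univ.filter (fun i => ¬ Seen b' n k (cand b' n k (π i)))) := by
    apply Finset.filter_congr
    intro i _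
    rw [cand_congr hk hbb (π i)]
    exact not_congr ⟨seen_congr hbb, seen_congr (fun j hj => (hbb j hj).symm)⟩
  simp only [nextSym, hfilter]

noncomputable def gseq (t n : ℕ) [NeZero t] (π : Fin t → Fin t) : ℕ → Fin t
  | k =>
    if k < n then 0
    else nextSym π n (fun j => if h : j < k then gseq t n π j else 0) k
  termination_by k => k
  decreasing_by exact h

lemma gseq_eq {π : Fin t → Fin t} {n : ℕ} (k : ℕ) :
    gseq t n π k = if k < n then 0 else nextSym π n (gseq t n π) k := by
  rw [gseq]
  by_cases hk : k < n
  · rw [if_pos hk, if_pos hk]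
  · rw [if_neg hk, if_neg hk]
    exact nextSym_congr (by omega) (fun i hi => by simp [hi])

lemma gseq_zero {π : Fin t → Fin t} {n i : ℕ} (hi : i < n) : gseq t n π i = 0 := by
  rw [gseq_eq, if_pos hi]

lemma gseq_spec {π : Fin t → Fin t} {n k : ℕ} (hπ : Function.Bijective π) (hk : n ≤ k)
    (hns : ¬ Stuck (gseq t n π) n k) :
    ∃ i : Fin t, gseq t n π k = π i
      ∧ (∀ j : Fin t, j < i → Seen (gseq t n π) n k (cand (gseq t n π) n k (π j)))
      ∧ ¬ Seen (gseq t n π) n k (cand (gseq t n π) n k (π i)) := by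
  have hval : gseq t n π k = nextSym π n (gseq t n π) k := by
    rw [gseq_eq, if_neg (by omega)]
  obtain ⟨i, h1, h2, h3⟩ := nextSym_spec hπ hns
  exact ⟨i, hval.trans h1, h2, h3⟩

lemma gseq_master {π : Fin t → Fin t} {n : ℕ} (ht : 2 ≤ t) (hn : 1 ≤ n)
    (hπ : Function.Bijective π) (hπ0 : π ⟨t-1, by omega⟩ = 0) :
    ∀ k, n ≤ k → k ≤ t^n + n - 1 → Dist (gseq t n π) n k ∧ GSg π (gseq t n π) n k := by
  have htn : 2 ≤ t ^ n := le_trans ht (Nat.le_self_pow (by omega) t)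
  have hz : ∀ i, i < n → gseq t n π i = 0 := fun i hi => gseq_zero hi
  intro k hk
  induction k, hk using Nat.le_induction with
  | base =>
    intro _
    constructor
    · intro p q hp hq hw; omega
    · intro k' h1 h2; omega
  | succ k hk ih =>
    intro hkL
    obtain ⟨hd, hG⟩ := ih (by omega)
    have hns : ¬ Stuck (gseq t n π) n k := by
      intro hstuck
      have hall := fun w => stuck_all_seen ht hn hk hz hd hG hπ hπ0 hstuck w
      have h1 := all_seen_card hn hk hall
      have h2 := dist_card hn hk hd
      omega
    obtain ⟨i, hval, hseenlt, hunseen⟩ := gseq_spec hπ hk hns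
    rw [← hval, ← word_eq_cand hn hk] at hunseen
    constructor
    · exact dist_succ hn hk hd hunseen
    · intro k' h1 h2
      rcases Nat.lt_or_ge k' k with h | h
      · exact hG k' h1 h
      · have : k' = k := by omega
        subst this
        exact ⟨i, hval, hseenlt⟩

lemma gseq_final {π : Fin t → Fin t} {n : ℕ} (ht : 2 ≤ t) (hn : 1 ≤ n)
    (hπ : Function.Bijective π) (hπ0 : π ⟨t-1, by omega⟩ = 0) :
    Dist (gseq t n π) n (t^n + n - 1) ∧ GSg π (gseq t n π) n (t^n + n - 1)
      ∧ Stuck (gseq t n π) n (t^n + n - 1)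
      ∧ ∀ w : Fin n → Fin t, Seen (gseq t n π) n (t^n + n - 1) w := by
  have htn : 2 ≤ t ^ n := le_trans ht (Nat.le_self_pow (by omega) t)
  have hL : n ≤ t^n + n - 1 := by omega
  obtain ⟨hd, hG⟩ := gseq_master ht hn hπ hπ0 (t^n + n - 1) hL le_rfl
  have hstuck : Stuck (gseq t n π) n (t^n + n - 1) := by
    by_contra hns
    obtain ⟨i, hval, hseenlt, hunseen⟩ := gseq_spec hπ hL hns
    rw [← hval, ← word_eq_cand hn hL] at hunseen
    have hd' := dist_succ hn hL hd hunseen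
    have h2 := dist_card hn (by omega) hd'
    omega
  refine ⟨hd, hG, hstuck, fun w => stuck_all_seen ht hn hL
    (fun i hi => gseq_zero hi) hd hG hπ hπ0 hstuck w⟩
lemma gsg_unique_seq {π : Fin t → Fin t} {a b : ℕ → Fin t} {n L : ℕ} (hn : 1 ≤ n)
    (hza : ∀ i, i < n → a i = 0) (hzb : ∀ i, i < n → b i = 0)
    (hda : Dist a n L) (hdb : Dist b n L) (hGa : GSg π a n L) (hGb : GSg π b n L) :
    ∀ k, k < L → a k = b k := by
  intro k
  induction k using Nat.strong_induction_on with
  | _ k ih =>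
    intro hkL
    by_cases hk : k < n
    · rw [hza k hk, hzb k hk]
    · have hk' : n ≤ k := by omega
      have hab : ∀ i, i < k → a i = b i := fun i hi => ih i hi (by omega)
      have hba : ∀ i, i < k → b i = a i := fun i hi => (hab i hi).symm
      obtain ⟨ia, ha1, ha2⟩ := hGa k hk' hkL
      obtain ⟨ib, hb1, hb2⟩ := hGb k hk' hkL
      have hNa : ¬ Seen a n k (cand a n k (π ia)) := by
        rw [← ha1, ← word_eq_cand hn hk']
        rintro ⟨p, hp, hw⟩
        have := hda p (k-n+1) (by omega) (by omega) hw
        omega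
      have hNb : ¬ Seen b n k (cand b n k (π ib)) := by
        rw [← hb1, ← word_eq_cand hn hk']
        rintro ⟨p, hp, hw⟩
        have := hdb p (k-n+1) (by omega) (by omega) hw
        omega
      have hia_ib : ia = ib := by
        by_contra hne
        rcases lt_or_gt_of_ne hne with h | h
        · have hsb := hb2 ia h
          apply hNa
          rw [cand_congr hk' hab]
          exact seen_congr hba hsb
        · have hsa := ha2 ib h
          apply hNb
          rw [cand_congr hk' hba]
          exact seen_congr hab hsa
      rw [ha1, hb1, hia_ib]

lemma pf_unique {a : ℕ → Fin t} {π₁ π₂ : Fin t → Fin t} {n L : ℕ} (ht : 2 ≤ t) (hn : 1 ≤ n)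
    (hL : n ≤ L) (hz : ∀ i, i < n → a i = 0) (hd : Dist a n L)
    (hfull : ∀ w : Fin n → Fin t, Seen a n L w)
    (hG1 : GSg π₁ a n L) (hG2 : GSg π₂ a n L)
    (hb1 : Function.Bijective π₁) (hb2 : Function.Bijective π₂)
    (h01 : π₁ ⟨t-1, by omega⟩ = 0) (h02 : π₂ ⟨t-1, by omega⟩ = 0) : π₁ = π₂ := by
  have hzw0 : wordAt a n 0 = ezc n (st a n 0) 0 := by
    rw [wordAt_eq_ezc a hn 0, hz (0 + (n-1)) (by omega)]
  suffices key : ∀ m : ℕ, ∀ i : Fin t, (i:ℕ) = m → π₁ i = π₂ i by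
    funext i; exact key i.val i rfl
  intro m
  induction m using Nat.strong_induction_on with
  | _ m ih =>
    intro i him
    by_cases hit : (i:ℕ) = t - 1
    · have : i = ⟨t-1, by omega⟩ := Fin.ext hit
      rw [this, h01, h02]
    · have hilt : (i:ℕ) < t - 1 := by have := i.isLt; omega
      set c := π₁ i with hc
      have hc0 : c ≠ 0 := by
        intro h
        have : i = ⟨t-1, by omega⟩ := hb1.1 (h.trans h01.symm)
        rw [this] at hilt
        simp only [Fin.val_mk] at hilt
        omega
      obtain ⟨p, hpL, hwp⟩ := hfull (ezc n (st a n 0) c)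
      have hp0 : p ≠ 0 := by
        rintro rfl
        exact hc0 ((ezc_inj hn (hzw0.symm.trans hwp)).2).symm
      -- facts about position p
      have hwp' := hwp
      rw [wordAt_eq_ezc a hn p] at hwp'
      obtain ⟨hstp, hlast⟩ := ezc_inj hn hwp'
      set k' := p + n - 1 with hk'def
      have hk'1 : n ≤ k' := by omega
      have hk'2 : k' < L := by omega
      have hak' : a k' = c := by
        rw [show k' = p + (n-1) by omega]; exact hlast
      have hcand' : ∀ (q : ℕ) (d : Fin t), 1 ≤ q → st a n q = st a n 0 →
          cand a n (q + n - 1) d = ezc n (st a n 0) d := by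
        intro q d hq hst
        rw [cand_eq_ezc a (by omega), show q + n - 1 - (n-1) = q by omega, hst]
      -- (B) the word `0^(n-1) c` is not seen before k'
      have hB : ¬ Seen a n k' (ezc n (st a n 0) c) := by
        rintro ⟨q, hq, hwq⟩
        have := hd q p (by omega) hpL (hwq.trans hwp.symm)
        omega
      -- (C) seen zero-state words below k' come from smaller π₁-indices
      have hC : ∀ d : Fin t, Seen a n k' (ezc n (st a n 0) d) →
          d = 0 ∨ ∃ m' : Fin t, m' < i ∧ d = π₁ m' := by
        rintro d ⟨q, hq, hwq⟩
        by_cases hq0 : q = 0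
        · subst hq0
          exact Or.inl ((ezc_inj hn (hzw0.symm.trans hwq)).2).symm
        · have hwq' := hwq
          rw [wordAt_eq_ezc a hn q] at hwq'
          obtain ⟨hstq, hlastq⟩ := ezc_inj hn hwq'
          obtain ⟨i'', he'', hs''⟩ := hG1 (q + n - 1) (by omega) (by omega)
          have hd'' : π₁ i'' = d := by
            rw [← he'', show q + n - 1 = q + (n-1) by omega, hlastq]
          have hne : i'' ≠ i := by
            rintro rfl
            have : wordAt a n q = wordAt a n p := by
              rw [hwq, hwp, ← hd'', ← hc]
            have := hd q p (by omega) hpL this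
            omega
          have hnlt : ¬ (i < i'') := by
            intro hlt
            have hseen := hs'' i hlt
            rw [hcand' q c (by omega) hstq] at hseen
            exact hB (seen_mono (by omega) hseen)
          have : i'' < i := by
            rcases lt_trichotomy i'' i with h | h | h
            · exact h
            · exact absurd h hne
            · exact absurd h hnlt
          exact Or.inr ⟨i'', this, hd''.symm⟩
      -- greedy for π₂ at k'
      obtain ⟨i₂, he₂, hs₂⟩ := hG2 k' hk'1 hk'2
      have hcand'' : ∀ d : Fin t, cand a n k' d = ezc n (st a n 0) d := by
        intro d
        rw [hk'def]
        exact hcand' p d (by omega) hstp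
      have hpi₂ : π₂ i₂ = c := by rw [← he₂, hak']
      have hi₂ : i₂ = i := by
        rcases lt_trichotomy i₂ i with h | h | h
        · have hIH : π₁ i₂ = π₂ i₂ := ih (i₂ : ℕ) (by have := Fin.lt_def.1 h; omega) i₂ rfl
          have : i₂ = i := hb1.1 (by rw [hIH, hpi₂, hc])
          exact absurd this (ne_of_lt h)
        · exact h
        · have hseen := hs₂ i h
          rw [hcand'' (π₂ i)] at hseen
          rcases hC (π₂ i) hseen with h0 | ⟨m', hm', hme⟩
          · have : i = ⟨t-1, by omega⟩ := hb2.1 (h0.trans h02.symm)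
            rw [this] at hilt
            simp only [Fin.val_mk] at hilt
            omega
          · have hIH : π₁ m' = π₂ m' := ih (m':ℕ) (by have := Fin.lt_def.1 hm'; omega) m' rfl
            have : i = m' := hb2.1 (by rw [hme, hIH])
            rw [this] at hm'
            exact absurd hm' (lt_irrefl _)
      rw [← hpi₂, hi₂]
lemma dist_congr {a b : ℕ → Fin t} {n L : ℕ} (hab : ∀ i, i < L → a i = b i)
    (h : Dist a n L) : Dist b n L := by
  intro p q hp hq hw
  apply h p q hp hq
  rw [wordAt_congr hab hp, wordAt_congr hab hq]
  exact hw

lemma gsg_congr {π : Fin t → Fin t} {a b : ℕ → Fin t} {n L : ℕ}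
    (hab : ∀ i, i < L → a i = b i) (h : GSg π a n L) : GSg π b n L := by
  intro k hk hkL
  obtain ⟨i, h1, h2⟩ := h k hk hkL
  have habk : ∀ i', i' < k → a i' = b i' := fun i' hi' => hab i' (by omega)
  refine ⟨i, by rw [← hab k hkL]; exact h1, fun j hj => ?_⟩
  rw [← cand_congr hk habk]
  exact seen_congr habk (h2 j hj)

lemma stuck_congr {a b : ℕ → Fin t} {n L : ℕ} (hL : n ≤ L)
    (hab : ∀ i, i < L → a i = b i) (h : Stuck a n L) : Stuck b n L := by
  intro c
  rw [← cand_congr hL hab]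
  exact seen_congr hab (h c)

lemma genseq_gsg {n L : ℕ} {I : Fin n → Fin t} {P : (Fin 0 → Fin t) → Fin t → Fin t}
    {a : ℕ → Fin t} (h : GenSeqFrom t 0 n I P a L) :
    GSg (P (fun j => j.elim0)) a n L := by
  intro k hk hkL
  obtain ⟨i, h1, h2⟩ := h.greedy k hk hkL
  have hw0 : wordAt a 0 (k - 0) = (fun j : Fin 0 => j.elim0) := funext fun j => j.elim0
  have he : P (wordAt a 0 (k - 0)) = P (fun j => j.elim0) := congrArg P hw0
  rw [he] at h1 h2
  exact ⟨i, h1, h2⟩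

lemma gsg_genseq {π : Fin t → Fin t} {a : ℕ → Fin t} {n L : ℕ} (hL : n ≤ L)
    (hz : ∀ i, i < n → a i = 0) (hd : Dist a n L) (hG : GSg π a n L) (hstuck : Stuck a n L) :
    GenSeqFrom t 0 n (zeroWord t n) (fun _ => π) a L where
  len_ge := hL
  init := fun j => hz j j.isLt
  inj := hd
  greedy := fun k hk hkL => hG k hk hkL
  maximal := hstuck

lemma member_gseq {π : Fin t → Fin t} {n : ℕ} (ht : 2 ≤ t) (hn : 1 ≤ n)
    (hπ : Function.Bijective π) (hπ0 : π ⟨t-1, by omega⟩ = 0) :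
    (∀ i, i < n → (ext (fun i : Fin (t^n+n-1) => gseq t n π i) i : ℕ) = 0) ∧
    (∀ w : Fin n → Fin t, ∃! p, p + n ≤ t ^ n + n - 1 ∧
      wordAt (ext (fun i : Fin (t^n+n-1) => gseq t n π i)) n p = w) ∧
    ∃ P : (Fin 0 → Fin t) → Fin t → Fin t, IsPrefFun t 0 P ∧
      GenSeqFrom t 0 n (zeroWord t n) P (ext (fun i : Fin (t^n+n-1) => gseq t n π i))
        (t^n+n-1) := by
  have htn : 2 ≤ t ^ n := le_trans ht (Nat.le_self_pow (by omega) t)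
  have hnL : n ≤ t ^ n + n - 1 := by omega
  set a := ext (fun i : Fin (t^n+n-1) => gseq t n π i) with ha
  have hae : ∀ i, i < t^n+n-1 → gseq t n π i = a i := by
    intro i hi
    simp [ha, ext, hi]
  obtain ⟨hd, hG, hstuck, hfull⟩ := gseq_final ht hn hπ hπ0
  have hd' : Dist a n (t^n+n-1) := dist_congr hae hd
  have hG' : GSg π a n (t^n+n-1) := gsg_congr hae hG
  have hstuck' : Stuck a n (t^n+n-1) := stuck_congr hnL hae hstuck
  have hfull' : ∀ w : Fin n → Fin t, Seen a n (t^n+n-1) w := fun w => seen_congr hae (hfull w)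
  have hz' : ∀ i, i < n → a i = 0 := by
    intro i hi
    rw [← hae i (by omega), gseq_zero hi]
  refine ⟨?_, ?_, ⟨fun _ => π, fun _ => hπ, gsg_genseq hnL hz' hd' hG' hstuck'⟩⟩
  · intro i hi
    rw [hz' i hi]
    simp
  · intro w
    obtain ⟨p, hp1, hp2⟩ := hfull' w
    exact ⟨p, ⟨hp1, hp2⟩, fun q hq => hd' q p hq.1 hp1 (by rw [hq.2, hp2])⟩
set_option maxHeartbeats 1000000 in
lemma last_pref_zero {a : ℕ → Fin t} {π : Fin t → Fin t} {n : ℕ} (ht : 2 ≤ t) (hn : 2 ≤ n)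
    (hz : ∀ i, i < n → a i = 0) (hd : Dist a n (t^n + n - 1)) (hG : GSg π a n (t^n+n-1))
    (hπ : Function.Bijective π) (hstuck : Stuck a n (t^n+n-1))
    (hfull : ∀ w : Fin n → Fin t, Seen a n (t^n+n-1) w) : π ⟨t-1, by omega⟩ = 0 := by
  have htn : 2 ≤ t ^ n := le_trans ht (Nat.le_self_pow (by omega) t)
  have hL : n ≤ t^n + n - 1 := by omega
  have hn1 : 1 ≤ n := by omega
  set L := t^n + n - 1 with hLdef
  have hss : st a n (L-n+1) = st a n 0 := stuck_state hn1 hL hd hstuck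
  have haL1 : a (L-1) = 0 := by
    have hcf := congrFun hss ⟨n-2, by omega⟩
    simp only [st, Fin.val_mk] at hcf
    rw [show L - 1 = (L-n+1) + (n-2) by omega, hcf]
    exact hz (0 + (n-2)) (by omega)
  obtain ⟨i₀, he₀, hs₀⟩ := hG (L-1) (by omega) (by omega)
  by_contra hne0
  have hpi₀ : π i₀ = 0 := by rw [← he₀, haL1]
  have hi₀lt : (i₀:ℕ) < t - 1 := by
    have := i₀.isLt
    rcases Nat.lt_or_ge (i₀:ℕ) (t-1) with h | h
    · exact h
    · refine absurd ?_ hne0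
      rw [show (⟨t-1, by omega⟩ : Fin t) = i₀ from Fin.ext (show t-1 = (i₀:ℕ) by omega), hpi₀]
  set c := π ⟨t-1, by omega⟩ with hcdef
  have hc0 : c ≠ 0 := by
    intro h
    have h2 := hπ.1 (h.trans hpi₀.symm)
    have hv := congrArg Fin.val h2
    simp only [Fin.val_mk] at hv
    omega
  have hwLn : wordAt a n (L-n) = ezc n (st a n (L-n)) 0 := by
    rw [wordAt_eq_ezc a (by omega) (L-n), show L-n+(n-1) = L-1 by omega, haL1]
  obtain ⟨q, hqL, hwq⟩ := hfull (ezc n (st a n (L-n)) c)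
  have hq0 : q ≠ 0 := by
    rintro rfl
    apply hc0
    have hcf := congrFun hwq ⟨n-1, by omega⟩
    rw [ezc_last (by omega)] at hcf
    rw [← hcf]
    exact (hz (0 + (n-1)) (by omega))
  have hqne : q ≠ L - n := by
    rintro rfl
    rw [hwLn] at hwq
    exact hc0 ((ezc_inj (by omega) hwq).2).symm
  have hqlt : q + n ≤ L - 1 := by omega
  obtain ⟨i'', he'', hs''⟩ := hG (q+n-1) (by omega) (by omega)
  have hwq' := hwq
  rw [wordAt_eq_ezc a (by omega) q] at hwq'
  obtain ⟨hstq, hlastq⟩ := ezc_inj (by omega) hwq'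
  have hi'' : i'' = ⟨t-1, by omega⟩ :=
    hπ.1 (by rw [← he'', show q+n-1 = q+(n-1) by omega]; exact hlastq.trans hcdef)
  have hseen := hs'' i₀ (by rw [hi'', Fin.lt_def]; exact hi₀lt)
  rw [hpi₀, cand_eq_ezc a (by omega), show q+n-1-(n-1) = q by omega, hstq, ← hwLn] at hseen
  obtain ⟨r, hr, hwr⟩ := hseen
  have := hd r (L-n) (by omega) (by omega) hwr
  omega

lemma n1_pref {a : ℕ → Fin t} (ht : 2 ≤ t) (hz : a 0 = 0)
    (hd : Dist a 1 t) (hfull : ∀ w : Fin 1 → Fin t, Seen a 1 t w) :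
    ∃ π : Fin t → Fin t, Function.Bijective π ∧ π ⟨t-1, by omega⟩ = 0 ∧ GSg π a 1 t := by
  have hword : ∀ p, wordAt a 1 p = fun _ : Fin 1 => a p := by
    intro p
    funext j
    have hj : (j:ℕ) = 0 := by omega
    simp only [wordAt, hj]
    rfl
  have hcand : ∀ k (c : Fin t), cand a 1 k c = fun _ : Fin 1 => c := by
    intro k c
    funext j
    have hj : (j:ℕ) + 1 = 1 := by have := j.isLt; omega
    simp only [cand, if_pos hj]
  have hainj : ∀ p q, p < t → q < t → a p = a q → p = q := by
    intro p q hp hq h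
    apply hd p q (by omega) (by omega)
    rw [hword p, hword q, h]
  set π := fun j : Fin t => if (j:ℕ) = t-1 then (0 : Fin t) else a ((j:ℕ)+1) with hπdef
  have hinj : Function.Injective π := by
    intro x y hxy
    simp only [hπdef] at hxy
    by_cases hx : (x:ℕ) = t-1 <;> by_cases hy : (y:ℕ) = t-1
    · exact Fin.ext (hx.trans hy.symm)
    · rw [if_pos hx, if_neg hy] at hxy
      have := hainj 0 ((y:ℕ)+1) (by omega) (by have := y.isLt; omega) (by rw [hz, ← hxy])
      omega
    · rw [if_neg hx, if_pos hy] at hxy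
      have := hainj 0 ((x:ℕ)+1) (by omega) (by have := x.isLt; omega) (by rw [hz, hxy])
      omega
    · rw [if_neg hx, if_neg hy] at hxy
      have := hainj ((x:ℕ)+1) ((y:ℕ)+1) (by have := x.isLt; omega) (by have := y.isLt; omega) hxy
      exact Fin.ext (by omega)
  refine ⟨π, ⟨hinj, Finite.surjective_of_injective hinj⟩, by simp [hπdef], ?_⟩
  intro k hk hkL
  refine ⟨⟨k-1, by omega⟩, ?_, ?_⟩
  · simp only [hπdef, Fin.val_mk]
    rw [if_neg (by omega), show k-1+1 = k by omega]
  · intro j hj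
    have hjv : (j:ℕ) < k - 1 := by
      have := Fin.lt_def.1 hj
      simpa using this
    refine ⟨(j:ℕ)+1, by omega, ?_⟩
    rw [hword, hcand]
    funext _
    simp only [hπdef]
    rw [if_neg (by have := j.isLt; omega)]
lemma card_vp (ht : 2 ≤ t) :
    Nat.card {f : Fin t → Fin t // Function.Bijective f ∧ f ⟨t-1, by omega⟩ = 0}
      = Nat.factorial (t - 1) := by
  obtain ⟨m, rfl⟩ : ∃ m, t = m + 1 := ⟨t-1, by omega⟩
  have e1 : {f : Fin (m+1) → Fin (m+1) // Function.Bijective f ∧ f ⟨m+1-1, by omega⟩ = 0}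
      ≃ {e : Equiv.Perm (Fin (m+1)) // e (Fin.last m) = 0} :=
    { toFun := fun f => ⟨Equiv.ofBijective f.1 f.2.1, f.2.2⟩
      invFun := fun e => ⟨e.1, e.1.bijective, e.2⟩
      left_inv := fun f => Subtype.ext rfl
      right_inv := fun e => Subtype.ext (Equiv.ext fun x => rfl) }
  have e2 : {e : Equiv.Perm (Fin (m+1)) // e (Fin.last m) = 0}
      ≃ {e : Equiv.Perm (Fin (m+1)) // e 0 = 0} :=
    { toFun := fun e => ⟨(Equiv.swap 0 (Fin.last m)).trans e.1, by
        simp only [Equiv.trans_apply, Equiv.swap_apply_left]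
        exact e.2⟩
      invFun := fun e => ⟨(Equiv.swap 0 (Fin.last m)).trans e.1, by
        simp only [Equiv.trans_apply, Equiv.swap_apply_right]
        exact e.2⟩
      left_inv := fun e => Subtype.ext (Equiv.ext fun x => by
        simp [Equiv.trans_apply, Equiv.swap_apply_self])
      right_inv := fun e => Subtype.ext (Equiv.ext fun x => by
        simp [Equiv.trans_apply, Equiv.swap_apply_self]) }
  have e3 : {e : Equiv.Perm (Fin (m+1)) // e 0 = 0} ≃ Equiv.Perm (Fin m) :=
    { toFun := fun e => (Equiv.Perm.decomposeFin e.1).2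
      invFun := fun σ => ⟨Equiv.Perm.decomposeFin.symm (0, σ),
        Equiv.Perm.decomposeFin_symm_apply_zero 0 σ⟩
      left_inv := fun e => by
        apply Subtype.ext
        have h1 : (Equiv.Perm.decomposeFin e.1).1 = 0 := by
          have h2 := Equiv.Perm.decomposeFin_symm_apply_zero
            (Equiv.Perm.decomposeFin e.1).1 (Equiv.Perm.decomposeFin e.1).2
          rw [Prod.mk.eta, Equiv.symm_apply_apply] at h2
          rw [← h2, e.2]
        conv_rhs => rw [← Equiv.symm_apply_apply Equiv.Perm.decomposeFin e.1]
        rw [← Prod.mk.eta (p := Equiv.Perm.decomposeFin e.1), h1]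
      right_inv := fun σ => by
        simp }
  rw [Nat.card_congr (e1.trans (e2.trans e3)), Nat.card_eq_fintype_card,
    Fintype.card_perm, Fintype.card_fin]
  simp
noncomputable def Fmap (t n : ℕ) [NeZero t] (ht : 2 ≤ t) (hn : 1 ≤ n)
    (π : {f : Fin t → Fin t // Function.Bijective f ∧ f ⟨t-1, by omega⟩ = 0}) :
    {S : Fin (t ^ n + n - 1) → Fin t //
      (∀ i, i < n → (ext S i : ℕ) = 0) ∧
      (∀ w : Fin n → Fin t, ∃! p, p + n ≤ t ^ n + n - 1 ∧ wordAt (ext S) n p = w) ∧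
      ∃ P : (Fin 0 → Fin t) → Fin t → Fin t, IsPrefFun t 0 P ∧
        GenSeqFrom t 0 n (zeroWord t n) P (ext S) (t ^ n + n - 1)} :=
  ⟨fun i => gseq t n π.1 i, member_gseq ht hn π.2.1 π.2.2⟩

lemma Fmap_bijective (t n : ℕ) [NeZero t] (ht : 2 ≤ t) (hn : 1 ≤ n) :
    Function.Bijective (Fmap t n ht hn) := by
  have htn : 2 ≤ t ^ n := le_trans ht (Nat.le_self_pow (by omega) t)
  have hnL : n ≤ t ^ n + n - 1 := by omega
  constructor
  · intro π₁ π₂ h12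
    have hv : (fun i : Fin (t ^ n + n - 1) => gseq t n π₁.1 (i:ℕ))
        = (fun i : Fin (t ^ n + n - 1) => gseq t n π₂.1 (i:ℕ)) := congrArg Subtype.val h12
    set a : ℕ → Fin t := ext (fun i : Fin (t ^ n + n - 1) => gseq t n π₁.1 i) with hadef
    have hae1 : ∀ i, i < t ^ n + n - 1 → gseq t n π₁.1 i = a i := by
      intro i hi; simp [hadef, ext, hi]
    have hae2 : ∀ i, i < t ^ n + n - 1 → gseq t n π₂.1 i = a i := by
      intro i hi
      rw [← hae1 i hi]
      exact (congrFun hv ⟨i, hi⟩).symm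
    obtain ⟨hd1, hG1, hstuck1, hfull1⟩ := gseq_final ht hn π₁.2.1 π₁.2.2
    obtain ⟨_, hG2, _, _⟩ := gseq_final ht hn π₂.2.1 π₂.2.2
    have hz' : ∀ i, i < n → a i = 0 := fun i hi => by
      rw [← hae1 i (by omega), gseq_zero hi]
    apply Subtype.ext
    exact pf_unique ht hn hnL hz' (dist_congr hae1 hd1)
      (fun w => seen_congr hae1 (hfull1 w)) (gsg_congr hae1 hG1) (gsg_congr hae2 hG2)
      π₁.2.1 π₂.2.1 π₁.2.2 π₂.2.2
  · rintro ⟨S, h0, hful, P, hP, hgen⟩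
    have hz' : ∀ i, i < n → ext S i = 0 := by
      intro i hi
      exact Fin.ext (by simpa using h0 i hi)
    have hd' : Dist (ext S) n (t ^ n + n - 1) := hgen.inj
    have hst' : Stuck (ext S) n (t ^ n + n - 1) := hgen.maximal
    have hfull' : ∀ w : Fin n → Fin t, Seen (ext S) n (t ^ n + n - 1) w := by
      intro w
      obtain ⟨p, hp, _⟩ := hful w
      exact ⟨p, hp.1, hp.2⟩
    have hG0 : GSg (P (fun j => j.elim0)) (ext S) n (t ^ n + n - 1) := genseq_gsg hgen
    have hb0 : Function.Bijective (P (fun j => j.elim0)) := hP _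
    obtain ⟨π, hbπ, hπ0, hGπ⟩ : ∃ π : Fin t → Fin t, Function.Bijective π ∧
        π ⟨t-1, by omega⟩ = 0 ∧ GSg π (ext S) n (t ^ n + n - 1) := by
      rcases Nat.lt_or_ge n 2 with hn2 | hn2
      · have hne : n = 1 := by omega
        subst hne
        have hLt : t ^ 1 + 1 - 1 = t := by rw [pow_one]; omega
        set b := ext S with hb
        rw [hLt] at hd' hfull'
        obtain ⟨π, h1, h2, h3⟩ := n1_pref ht (hz' 0 (by omega)) hd' hfull'
        exact ⟨π, h1, h2, by rw [show t^1+1-1 = t from hLt]; exact h3⟩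
      · exact ⟨P (fun j => j.elim0), hb0,
          last_pref_zero ht hn2 hz' hd' hG0 hb0 hst' hfull', hG0⟩
    obtain ⟨hdg, hGg, _, _⟩ := gseq_final ht hn hbπ hπ0
    have heq := gsg_unique_seq hn hz' (fun i hi => gseq_zero hi) hd' hdg hGπ hGg
    refine ⟨⟨π, hbπ, hπ0⟩, ?_⟩
    apply Subtype.ext
    funext i
    show gseq t n π (i:ℕ) = S i
    rw [← heq (i:ℕ) i.isLt]
    simp [ext, i.isLt]

/-- The number of de Bruijn sequences of order `n` started at `0^n`
with preference function complexity `0` (i.e. generated by some span-`0` preference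
function) is exactly `(t-1)!`. -/
theorem statement_12 (t n : ℕ) [NeZero t] (ht : 2 ≤ t) (hn : 1 ≤ n) :
    Nat.card {S : Fin (t ^ n + n - 1) → Fin t //
      (∀ i, i < n → (ext S i : ℕ) = 0) ∧
      (∀ w : Fin n → Fin t, ∃! p, p + n ≤ t ^ n + n - 1 ∧ wordAt (ext S) n p = w) ∧
      ∃ P : (Fin 0 → Fin t) → Fin t → Fin t, IsPrefFun t 0 P ∧
        GenSeqFrom t 0 n (zeroWord t n) P (ext S) (t ^ n + n - 1)} = Nat.factorial (t - 1) := by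
  rw [← Nat.card_eq_of_bijective (Fmap t n ht hn) (Fmap_bijective t n ht hn)]
  exact card_vp ht
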